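/- arXiv:2005.09125 — 2 statements merged into one kernel-verified Lean document; each statement's English description precedes it below -/
import Mathlib

section
/- Subsumption between macrostates of the (N,C,B)-complement of an FANBW: if m = (N,C,B) and m' = (N',C',B') are accepting-phase macrostates of A^c with N = N' and C ⊆ C', then L((A^c)^{m'}) ⊆ L((A^c)^m). -/
open Classical

variable {Q : Type} {A : Type}

/-- A nondeterministic Büchi automaton on words (NBW). -/
structure NBW (Q : Type) (A : Type) where
  I : Set Q
  δ : Q → A → Set Q
  F : Set Q

namespace NBW

/-- Transition function extended to sets of states. -/
def δset (M : NBW Q A) (S : Set Q) (a : A) : Set Q := ⋃ q ∈ S, M.δ q a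

/-- A run of `M` on the word `w`. -/
def IsRun (M : NBW Q A) (w : ℕ → A) (ρ : ℕ → Q) : Prop :=
  ρ 0 ∈ M.I ∧ ∀ i, ρ (i + 1) ∈ M.δ (ρ i) (w i)

/-- An accepting run: a run visiting accepting states infinitely often. -/
def IsAccRun (M : NBW Q A) (w : ℕ → A) (ρ : ℕ → Q) : Prop :=
  M.IsRun w ρ ∧ ∀ n, ∃ m ≥ n, ρ m ∈ M.F

/-- `M` accepts the word `w`. -/
def Accepts (M : NBW Q A) (w : ℕ → A) : Prop := ∃ ρ, M.IsAccRun w ρ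

/-- `M` is finitely ambiguous (an FANBW): each word has finitely many accepting runs. -/
def FA (M : NBW Q A) : Prop := ∀ w : ℕ → A, {ρ | M.IsAccRun w ρ}.Finite

/-- Completeness of the transition function. -/
def Complete (M : NBW Q A) : Prop := ∀ (q : Q) (a : A), (M.δ q a).Nonempty

/-- Reverse determinism: each state has at most one `a`-predecessor. -/
def ReverseDet (M : NBW Q A) : Prop :=
  ∀ (q' : Q) (a : A), {q | q' ∈ M.δ q a}.Subsingleton

/-- The set of states at level `l` of the run DAG `G_{w,M}`. -/
def V (M : NBW Q A) (w : ℕ → A) : ℕ → Set Q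
  | 0 => M.I
  | l + 1 => M.δset (V M w l) (w l)

/-- Edge of the run DAG `G_{w,M}` from `⟨q,l⟩` to `⟨q',l+1⟩`. -/
def Edge (M : NBW Q A) (w : ℕ → A) (l : ℕ) (q q' : Q) : Prop :=
  q ∈ M.V w l ∧ q' ∈ M.δ q (w l)

/-- An ω-branch of the run DAG `G_{w,M}` (identified with its sequence of states). -/
def IsBranch (M : NBW Q A) (w : ℕ → A) (b : ℕ → Q) : Prop :=
  b 0 ∈ M.I ∧ ∀ l, M.Edge w l (b l) (b (l + 1))

/-- Edge of the co-deterministic run DAG `G^e_{w,M}`: only the edge from the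
minimal-index predecessor (w.r.t. the linear order enumerating `Q`) is kept. -/
def EdgeE [LinearOrder Q] (M : NBW Q A) (w : ℕ → A) (l : ℕ) (q q' : Q) : Prop :=
  IsLeast {p | p ∈ M.V w l ∧ q' ∈ M.δ p (w l)} q

/-- An ω-branch of the co-deterministic run DAG `G^e_{w,M}`. -/
def IsBranchE [LinearOrder Q] (M : NBW Q A) (w : ℕ → A) (b : ℕ → Q) : Prop :=
  b 0 ∈ M.I ∧ ∀ l, M.EdgeE w l (b l) (b (l + 1))

/-- A branch of `G^e_{w,M}` starting from vertex `⟨q,l⟩`. -/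
def BranchFromE [LinearOrder Q] (M : NBW Q A) (w : ℕ → A) (l : ℕ) (q : Q) (b : ℕ → Q) : Prop :=
  b 0 = q ∧ q ∈ M.V w l ∧ ∀ i, M.EdgeE w (l + i) (b i) (b (i + 1))

/-- The vertex `⟨q,l⟩` of `G^e_{w,M}` is finite: no infinite branch starts from it. -/
def FiniteVertexE [LinearOrder Q] (M : NBW Q A) (w : ℕ → A) (l : ℕ) (q : Q) : Prop :=
  ¬ ∃ b, M.BranchFromE w l q b

/-- The minimal set of predecessors `S_min` of `δ(S,b)` within `S`. -/
def Smin [LinearOrder Q] (M : NBW Q A) (S : Set Q) (b : A) : Set Q :=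
  {q | ∃ q' ∈ M.δset S b, IsLeast {p | p ∈ S ∧ q' ∈ M.δ p b} q}

/-- The reduced transition function `δ^e` for the level with state set `S` and letter `b`. -/
def δe [LinearOrder Q] (M : NBW Q A) (S : Set Q) (b : A) (S₁ : Set Q) : Set Q :=
  M.δset (S₁ ∩ M.Smin S b) b

/-- The reduced transition function at level `ℓ` of `G^e_{w,M}`. -/
def δeAt [LinearOrder Q] (M : NBW Q A) (w : ℕ → A) (ℓ : ℕ) (S₁ : Set Q) : Set Q :=
  M.δe (M.V w ℓ) (w ℓ) S₁

end NBW

section DAG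

variable (E : ℕ → Q → Q → Prop) (U : Set (Q × ℕ))

/-- An infinite branch from vertex `v` staying inside the vertex set `U`,
following the edge relation `E`. -/
def DagBranchIn (v : Q × ℕ) (b : ℕ → Q) : Prop :=
  b 0 = v.1 ∧ (∀ i, (b i, v.2 + i) ∈ U) ∧ ∀ i, E (v.2 + i) (b i) (b (i + 1))

/-- Vertex `v` is finite in the sub-DAG `U`: no infinite branch from `v` inside `U`. -/
def DagFiniteIn (v : Q × ℕ) : Prop := ¬ ∃ b, DagBranchIn E U v b

/-- One-step reachability inside `U`. -/
def DagStep (v v' : Q × ℕ) : Prop :=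
  v ∈ U ∧ v' ∈ U ∧ v'.2 = v.2 + 1 ∧ E v.2 v.1 v'.1

/-- Vertex `v` is F-free in `U`: not finite, and no F-vertex reachable from it in `U`. -/
def DagFFreeIn (F : Set Q) (v : Q × ℕ) : Prop :=
  ¬ DagFiniteIn E U v ∧ ∀ v', Relation.ReflTransGen (DagStep E U) v v' → v'.1 ∉ F

/-- The rank-stripping sequence of sub-DAGs: `G⁰ = G0`; `G^{2i+1}` removes the finite
vertices of `G^{2i}`; `G^{2i+2}` removes the F-free vertices of `G^{2i+1}`. -/
def DagStrip (F : Set Q) (G0 : Set (Q × ℕ)) : ℕ → Set (Q × ℕ)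
  | 0 => G0
  | i + 1 =>
      let U' := DagStrip F G0 i
      if i % 2 = 0 then U' \ {v | DagFiniteIn E U' v}
      else U' \ {v | DagFFreeIn E U' F v}

end DAG

namespace NBW

/-- The vertex set of the run DAG `G_{w,M}` (also of `G^e_{w,M}`). -/
def DagVertices (M : NBW Q A) (w : ℕ → A) : Set (Q × ℕ) := {v | v.1 ∈ M.V w v.2}

/-- Level rankings with maximum rank 2: `none` plays the role of `⊥`. -/
def IsLR (M : NBW Q A) (f : Q → Option (Fin 3)) : Prop :=
  ∀ q r, f q = some r → q ∈ M.F → (r : ℕ) % 2 = 0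

/-- Domain of a level ranking. -/
def rankDom (f : Q → Option (Fin 3)) : Set Q := {q | (f q).isSome}

/-- Coverage relation `f' ⪯^{δ^e}_a f` for level rankings. -/
def Covers [LinearOrder Q] (M : NBW Q A) (a : A) (f f' : Q → Option (Fin 3)) : Prop :=
  (∀ q r q', f q = some r → q' ∈ M.δe (rankDom f) a {q} →
    ∃ r', f' q' = some r' ∧ r' ≤ r) ∧
  (∀ q', (∀ q, q' ∈ M.δe (rankDom f) a {q} → f q = none) → f' q' = none)

/-- The rank-based complement of an FANBW, with maximum rank 2 and the reduced
transition function `δ^e`. -/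
noncomputable def rankComplement [LinearOrder Q] (M : NBW Q A) :
    NBW ((Q → Option (Fin 3)) × Set Q) A where
  I := {s | s.2 = ∅ ∧ ∀ q, s.1 q = if q ∈ M.I then some 2 else none}
  δ := fun s a =>
    {s' | M.Covers a s.1 s'.1 ∧ M.IsLR s'.1 ∧
      ((s.2 ≠ ∅ ∧
          s'.2 = M.δe (rankDom s.1) a s.2 \ {q | ∃ r, s'.1 q = some r ∧ (r : ℕ) % 2 = 1}) ∨
       (s.2 = ∅ ∧ s'.2 = {q | ∃ r, s'.1 q = some r ∧ (r : ℕ) % 2 = 0}))}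
  F := {s | s.2 = ∅}

/-- Slice-based DAG `G^s_{w,M}`: the set at position `p` of level `l`.
Level `0` consists of `I \ F` (position 0) and `I ∩ F` (position 1); from the
set at position `j` of level `l`, position `2j` of level `l+1` holds the non-`F`
successors and position `2j+1` the `F`-successors, keeping only the rightmost
occurrence of each state. -/
noncomputable def sliceSet (M : NBW Q A) (w : ℕ → A) : ℕ → ℕ → Set Q
  | 0, p => if p = 0 then M.I \ M.F else if p = 1 then M.I ∩ M.F else ∅
  | l + 1, p =>
      let S' : ℕ → Set Q := fun q =>
        if q % 2 = 0 then M.δset (sliceSet M w l (q / 2)) (w l) \ M.F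
        else M.δset (sliceSet M w l (q / 2)) (w l) ∩ M.F
      S' p \ ⋃ q ∈ Set.Ioi p, S' q

/-- An ω-branch of the slice-based DAG `G^s_{w,M}`, given by the positions it visits. -/
def IsSliceBranch (M : NBW Q A) (w : ℕ → A) (g : ℕ → ℕ) : Prop :=
  (∀ l, M.sliceSet w l (g l) ≠ ∅) ∧ ∀ l, g (l + 1) / 2 = g l

/-- There is an infinite branch of `G^s_{w,M}` starting from position `p` of level `l`. -/
def SliceBranchFrom (M : NBW Q A) (w : ℕ → A) (l p : ℕ) : Prop :=
  ∃ g : ℕ → ℕ, g 0 = p ∧ (∀ i, M.sliceSet w (l + i) (g i) ≠ ∅) ∧ ∀ i, g (i + 1) / 2 = g i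

/-- Accepting-phase transition of the `(N,C,B)` construction. -/
noncomputable def ncbStep [LinearOrder Q] (M : NBW Q A) (a : A)
    (t : Set Q × Set Q × Set Q) : Set Q × Set Q × Set Q :=
  (M.δe t.1 a t.1,
   M.δe t.1 a t.2.1 ∪ (M.δe t.1 a t.1 ∩ M.F),
   if t.2.2 = ∅ then M.δe t.1 a t.2.1 ∪ (M.δe t.1 a t.1 ∩ M.F) else M.δe t.1 a t.2.2)

/-- The slice-based specialized complement of an FANBW: the `(N,C,B)` construction. -/
noncomputable def ncbComplement [LinearOrder Q] (M : NBW Q A) :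
    NBW (Set Q ⊕ Set Q × Set Q × Set Q) A where
  I := {Sum.inl M.I}
  δ := fun s a =>
    match s with
    | Sum.inl S => {Sum.inl (M.δe S a S), Sum.inr (M.ncbStep a (S, S ∩ M.F, S ∩ M.F))}
    | Sum.inr t => {Sum.inr (M.ncbStep a t)}
  F := {s | ∃ t : Set Q × Set Q × Set Q, s = Sum.inr t ∧ t.2.2 = ∅}

/-- Trajectory of the deterministic accepting phase of the `(N,C,B)` construction. -/
noncomputable def ncbTraj [LinearOrder Q] (M : NBW Q A) (w : ℕ → A)
    (t₀ : Set Q × Set Q × Set Q) : ℕ → Set Q × Set Q × Set Q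
  | 0 => t₀
  | i + 1 => M.ncbStep (w i) (ncbTraj M w t₀ i)

end NBW

/-! In the accepting phase both macroruns are deterministic. Along them the `N`-components
coincide, `C ⊆ C'` and `B ⊆ C` persist, because `δ^e` is monotone in the set it is applied to.
When `B'` is emptied at step `j`, it is reset to `C'`, so `B_{j+1} ⊆ C_{j+1} ⊆ C'_{j+1} = B'_{j+1}`;
from then on `B ⊆ B'` persists as long as `B` stays nonempty, so `B` is emptied no later than
the next time `B'` is. -/

namespace NBW

section NcbAcceptingPhase

variable [LinearOrder Q] (M : NBW Q A)

lemma δe_mono (S : Set Q) (a : A) {S₁ S₂ : Set Q} (h : S₁ ⊆ S₂) :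
    M.δe S a S₁ ⊆ M.δe S a S₂ :=
  Set.biUnion_subset_biUnion_left (Set.inter_subset_inter_left _ h)

lemma ncbStep_snd_snd_of_ne_empty (a : A) {t : Set Q × Set Q × Set Q} (ht : t.2.2 ≠ ∅) :
    (M.ncbStep a t).2.2 = M.δe t.1 a t.2.2 := by
  simp only [ncbStep, if_neg ht]

lemma ncbStep_snd_snd_of_eq_empty (a : A) {t : Set Q × Set Q × Set Q} (ht : t.2.2 = ∅) :
    (M.ncbStep a t).2.2 = (M.ncbStep a t).2.1 := by
  simp only [ncbStep, if_pos ht]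

lemma ncbStep_snd_snd_subset_snd_fst (a : A) {t : Set Q × Set Q × Set Q}
    (ht : t.2.2 ⊆ t.2.1) : (M.ncbStep a t).2.2 ⊆ (M.ncbStep a t).2.1 := by
  by_cases hB : t.2.2 = ∅
  · rw [M.ncbStep_snd_snd_of_eq_empty a hB]
  · rw [M.ncbStep_snd_snd_of_ne_empty a hB]
    exact (M.δe_mono _ a ht).trans Set.subset_union_left

lemma ncbStep_snd_fst_mono (a : A) {t t' : Set Q × Set Q × Set Q} (hN : t.1 = t'.1)
    (hC : t.2.1 ⊆ t'.2.1) : (M.ncbStep a t).2.1 ⊆ (M.ncbStep a t').2.1 := by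
  simp only [ncbStep, hN]
  exact Set.union_subset_union_left _ (M.δe_mono _ a hC)

lemma ncbStep_snd_snd_subset (a : A) {t t' : Set Q × Set Q × Set Q} (hN : t.1 = t'.1)
    (hBC : t.2.2 ⊆ t.2.1) (hC : t.2.1 ⊆ t'.2.1) (hB : t.2.2.Nonempty)
    (hB' : t.2.2 ⊆ t'.2.2 ∨ t'.2.2 = ∅) :
    (M.ncbStep a t).2.2 ⊆ (M.ncbStep a t').2.2 := by
  rw [M.ncbStep_snd_snd_of_ne_empty a hB.ne_empty]
  rcases hB' with hBB' | hB'
  · rw [M.ncbStep_snd_snd_of_ne_empty a (hB.mono hBB').ne_empty, hN]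
    exact M.δe_mono _ a hBB'
  · rw [M.ncbStep_snd_snd_of_eq_empty a hB']
    calc M.δe t.1 a t.2.2 ⊆ M.δe t.1 a t.2.1 := M.δe_mono _ a hBC
      _ ⊆ (M.ncbStep a t).2.1 := Set.subset_union_left
      _ ⊆ (M.ncbStep a t').2.1 := M.ncbStep_snd_fst_mono a hN hC

lemma ncbTraj_snd_snd_subset_snd_fst (w : ℕ → A) {t₀ : Set Q × Set Q × Set Q}
    (h₀ : t₀.2.2 ⊆ t₀.2.1) (i : ℕ) : (M.ncbTraj w t₀ i).2.2 ⊆ (M.ncbTraj w t₀ i).2.1 := by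
  induction i with
  | zero => exact h₀
  | succ i ih => exact M.ncbStep_snd_snd_subset_snd_fst (w i) ih

lemma ncbTraj_fst_eq_and_snd_fst_subset (w : ℕ → A) {t₀ t₀' : Set Q × Set Q × Set Q}
    (hN : t₀.1 = t₀'.1) (hC : t₀.2.1 ⊆ t₀'.2.1) (i : ℕ) :
    (M.ncbTraj w t₀ i).1 = (M.ncbTraj w t₀' i).1 ∧
      (M.ncbTraj w t₀ i).2.1 ⊆ (M.ncbTraj w t₀' i).2.1 := by
  induction i with
  | zero => exact ⟨hN, hC⟩
  | succ i ih =>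
    refine ⟨?_, M.ncbStep_snd_fst_mono (w i) ih.1 ih.2⟩
    change M.δe _ _ _ = M.δe _ _ _
    rw [ih.1]

lemma frequently_ncbTraj_snd_snd_eq_empty (w : ℕ → A) {t₀ t₀' : Set Q × Set Q × Set Q}
    (hBC : t₀.2.2 ⊆ t₀.2.1) (hN : t₀.1 = t₀'.1) (hC : t₀.2.1 ⊆ t₀'.2.1)
    (h' : ∀ n, ∃ i ≥ n, (M.ncbTraj w t₀' i).2.2 = ∅) :
    ∀ n, ∃ i ≥ n, (M.ncbTraj w t₀ i).2.2 = ∅ := by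
  intro n
  by_contra! hne
  have hdom := M.ncbTraj_fst_eq_and_snd_fst_subset w hN hC
  have hB i := M.ncbTraj_snd_snd_subset_snd_fst w hBC i
  have hstep i (hi : n ≤ i) (hB' : (M.ncbTraj w t₀ i).2.2 ⊆ (M.ncbTraj w t₀' i).2.2 ∨
      (M.ncbTraj w t₀' i).2.2 = ∅) :=
    M.ncbStep_snd_snd_subset (w i) (hdom i).1 (hB i) (hdom i).2 (hne i hi) hB'
  obtain ⟨j, hj, hj_empty⟩ := h' n
  have hsub : ∀ i ≥ j + 1, (M.ncbTraj w t₀ i).2.2 ⊆ (M.ncbTraj w t₀' i).2.2 := by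
    intro i hi
    induction i, hi using Nat.le_induction with
    | base => exact hstep j hj (Or.inr hj_empty)
    | succ i hi ih => exact hstep i (by omega) (Or.inl ih)
  obtain ⟨k, hk, hk_empty⟩ := h' (j + 1)
  exact (hne k (by omega)).not_subset_empty (hk_empty ▸ hsub k hk)

lemma ncbComplement_from_accepts_iff (w : ℕ → A) (t₀ : Set Q × Set Q × Set Q) :
    ({ M.ncbComplement with I := {Sum.inr t₀} } : NBW _ A).Accepts w ↔
      ∀ n, ∃ i ≥ n, (M.ncbTraj w t₀ i).2.2 = ∅ := by
  constructor
  · rintro ⟨ρ, ⟨hρ₀, hρ⟩, hacc⟩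
    have hρ_eq : ∀ i, ρ i = Sum.inr (M.ncbTraj w t₀ i) := by
      intro i
      induction i with
      | zero => exact hρ₀
      | succ i ih => simpa [ih, ncbComplement, ncbTraj] using hρ i
    intro n
    obtain ⟨i, hi, t, hρi, ht⟩ := hacc n
    rw [hρ_eq i, Sum.inr.injEq] at hρi
    exact ⟨i, hi, hρi ▸ ht⟩
  · intro h
    refine ⟨fun i => Sum.inr (M.ncbTraj w t₀ i), ⟨rfl, fun _ => rfl⟩, fun n => ?_⟩
    obtain ⟨i, hi, hi_empty⟩ := h n
    exact ⟨i, hi, _, rfl, hi_empty⟩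

end NcbAcceptingPhase

end NBW

theorem ncb_macrostate_subsumption_general
    [LinearOrder Q] (M : NBW Q A)
    (N C B N' C' B' : Set Q)
    (hBC : B ⊆ C)
    (hNN : N = N') (hCC : C ⊆ C') (w : ℕ → A) :
    ({ M.ncbComplement with I := {Sum.inr (N', C', B')} } : NBW _ A).Accepts w →
    ({ M.ncbComplement with I := {Sum.inr (N, C, B)} } : NBW _ A).Accepts w := by
  rw [M.ncbComplement_from_accepts_iff, M.ncbComplement_from_accepts_iff]
  exact M.frequently_ncbTraj_snd_snd_eq_empty w hBC hNN hCC

/-- subsumption between macrostates of the `(N,C,B)` complement of an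
FANBW: if `m = (N,C,B)` and `m' = (N',C',B')` are accepting-phase macrostates with
`N = N'` and `C ⊆ C'`, then `L((M^c)^{m'}) ⊆ L((M^c)^m)`. -/
theorem ncb_macrostate_subsumption
    [Fintype Q] [LinearOrder Q] (M : NBW Q A) (hFA : M.FA)
    (N C B N' C' B' : Set Q)
    (hBC : B ⊆ C) (hCN : C ⊆ N) (hBC' : B' ⊆ C') (hCN' : C' ⊆ N')
    (hNN : N = N') (hCC : C ⊆ C') (w : ℕ → A) :
    ({ M.ncbComplement with I := {Sum.inr (N', C', B')} } : NBW _ A).Accepts w →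
    ({ M.ncbComplement with I := {Sum.inr (N, C, B)} } : NBW _ A).Accepts w :=
  ncb_macrostate_subsumption_general M N C B N' C' B' hBC hNN hCC w
end

section
/- If A is an FANBW, then for any word w the co-deterministic run DAG G^e_{w,A} is accepting iff the original run DAG G_{w,A} is accepting; moreover if G_{w,A} has m < ∞ accepting ω-branches then G^e_{w,A} has at least one and at most m accepting ω-branches. -/
open Classical

variable {Q : Type} {A : Type}

/-!
Every vertex of `G_{w,M}` has a minimal-index predecessor, so for each `n` an accepting run `ρ`
can be rerouted below level `n` along `G^e_{w,M}`-edges (ending in `ρ n`), keeping it accepting.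
Since there are only finitely many accepting runs, one of them is rerouted for infinitely many
`n`; it then uses `G^e_{w,M}`-edges at every level.
-/

namespace NBW

variable (M : NBW Q A) (w : ℕ → A)

theorem IsRun.mem_V {M : NBW Q A} {w : ℕ → A} {ρ : ℕ → Q} (h : M.IsRun w ρ) :
    ∀ l, ρ l ∈ M.V w l
  | 0 => h.1
  | l + 1 => Set.mem_biUnion (h.mem_V l) (h.2 l)

theorem isBranch_iff_isRun {ρ : ℕ → Q} : M.IsBranch w ρ ↔ M.IsRun w ρ :=
  ⟨fun h => ⟨h.1, fun l => (h.2 l).2⟩, fun h => ⟨h.1, fun l => ⟨h.mem_V l, h.2 l⟩⟩⟩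

theorem IsBranchE.isBranch [LinearOrder Q] {M : NBW Q A} {w : ℕ → A} {b : ℕ → Q}
    (h : M.IsBranchE w b) : M.IsBranch w b :=
  ⟨h.1, fun l => (h.2 l).1⟩

theorem exists_edgeE_of_mem_V_succ [LinearOrder Q] [WellFoundedLT Q] {l : ℕ} {q' : Q}
    (h : q' ∈ M.V w (l + 1)) : ∃ q, M.EdgeE w l q q' := by
  obtain ⟨p, hp, hpq'⟩ : ∃ p ∈ M.V w l, q' ∈ M.δ p (w l) := by simpa [V, δset] using h
  have hne : {q | q ∈ M.V w l ∧ q' ∈ M.δ q (w l)}.Nonempty := ⟨p, hp, hpq'⟩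
  exact ⟨_, wellFounded_lt.min_mem _ hne, fun _ hx => wellFounded_lt.min_le hx⟩

theorem exists_edgeE_prefix [LinearOrder Q] [WellFoundedLT Q] :
    ∀ (n : ℕ) (ρ : ℕ → Q), ρ n ∈ M.V w n → ∃ c : ℕ → Q, c 0 ∈ M.I ∧
      (∀ l, n ≤ l → c l = ρ l) ∧ ∀ l < n, M.EdgeE w l (c l) (c (l + 1))
  | 0, ρ, h => ⟨ρ, h, fun _ _ => rfl, fun _ h => absurd h (Nat.not_lt_zero _)⟩
  | n + 1, ρ, h => by
    obtain ⟨p, hp⟩ := M.exists_edgeE_of_mem_V_succ w h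
    obtain ⟨c, hc0, hcρ, hcE⟩ :=
      exists_edgeE_prefix n (Function.update ρ n p) (by simpa using hp.1.1)
    have hcn : c n = p := by simpa using hcρ n le_rfl
    have htail : ∀ l, n + 1 ≤ l → c l = ρ l := fun l hl => by
      simpa [Function.update_of_ne (show l ≠ n by omega)] using hcρ l (by omega)
    refine ⟨c, hc0, htail, fun l hl => ?_⟩
    rcases Nat.lt_succ_iff_lt_or_eq.1 hl with hl | rfl
    · exact hcE l hl
    · rwa [hcn, htail _ le_rfl]

theorem IsAccRun.exists_edgeE_prefix [LinearOrder Q] [WellFoundedLT Q] {M : NBW Q A}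
    {w : ℕ → A} {ρ : ℕ → Q} (hρ : M.IsAccRun w ρ) (n : ℕ) :
    ∃ c, M.IsAccRun w c ∧ ∀ l < n, M.EdgeE w l (c l) (c (l + 1)) := by
  obtain ⟨c, hc0, hcρ, hcE⟩ := M.exists_edgeE_prefix w n ρ (hρ.1.mem_V n)
  refine ⟨c, ⟨⟨hc0, fun l => ?_⟩, fun k => ?_⟩, hcE⟩
  · rcases lt_or_ge l n with hl | hl
    · exact (hcE l hl).1.2
    · rw [hcρ l hl, hcρ (l + 1) (by omega)]
      exact hρ.1.2 l
  · obtain ⟨m, hm, hmF⟩ := hρ.2 (max k n)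
    exact ⟨m, le_of_max_le_left hm, (hcρ m (le_of_max_le_right hm)).symm ▸ hmF⟩

theorem exists_isBranchE_of_isAccRun [LinearOrder Q] [WellFoundedLT Q]
    (hfin : {ρ | M.IsAccRun w ρ}.Finite) {ρ : ℕ → Q} (hρ : M.IsAccRun w ρ) :
    ∃ b, M.IsBranchE w b ∧ ∀ n, ∃ m ≥ n, b m ∈ M.F := by
  obtain ⟨c, hc, hfreq⟩ := hfin.frequently_exists.1
    (Filter.Frequently.of_forall (f := Filter.atTop) hρ.exists_edgeE_prefix)
  refine ⟨c, ⟨hc.1.1, fun l => ?_⟩, hc.2⟩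
  obtain ⟨n, hcn, hln⟩ := (hfreq.and_eventually (Filter.eventually_gt_atTop l)).exists
  exact hcn l hln

end NBW

/-- for an FANBW `M` and any word `w`, the co-deterministic run DAG
`G^e_{w,M}` is accepting iff the run DAG `G_{w,M}` is accepting; moreover, if `G_{w,M}`
has finitely many (and at least one) accepting ω-branches, then `G^e_{w,M}` has at
least one and at most that many accepting ω-branches. -/
theorem codet_dag_accepting_iff_and_branch_counts
    [Fintype Q] [LinearOrder Q] (M : NBW Q A) (hFA : M.FA) (w : ℕ → A) :
    ((∃ b, M.IsBranchE w b ∧ ∀ n, ∃ m ≥ n, b m ∈ M.F) ↔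
      (∃ b, M.IsBranch w b ∧ ∀ n, ∃ m ≥ n, b m ∈ M.F)) ∧
    ({b : ℕ → Q | M.IsBranch w b ∧ ∀ n, ∃ m ≥ n, b m ∈ M.F}.Finite →
     {b : ℕ → Q | M.IsBranch w b ∧ ∀ n, ∃ m ≥ n, b m ∈ M.F}.Nonempty →
      ({b : ℕ → Q | M.IsBranchE w b ∧ ∀ n, ∃ m ≥ n, b m ∈ M.F}.Nonempty ∧
       {b : ℕ → Q | M.IsBranchE w b ∧ ∀ n, ∃ m ≥ n, b m ∈ M.F}.Finite ∧
       {b : ℕ → Q | M.IsBranchE w b ∧ ∀ n, ∃ m ≥ n, b m ∈ M.F}.ncard ≤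
         {b : ℕ → Q | M.IsBranch w b ∧ ∀ n, ∃ m ≥ n, b m ∈ M.F}.ncard)) := by
  have hsub : {b : ℕ → Q | M.IsBranchE w b ∧ ∀ n, ∃ m ≥ n, b m ∈ M.F} ⊆
      {b : ℕ → Q | M.IsBranch w b ∧ ∀ n, ∃ m ≥ n, b m ∈ M.F} :=
    fun _ hb => ⟨hb.1.isBranch, hb.2⟩
  have hE : (∃ b, M.IsBranch w b ∧ ∀ n, ∃ m ≥ n, b m ∈ M.F) →
      ∃ b, M.IsBranchE w b ∧ ∀ n, ∃ m ≥ n, b m ∈ M.F :=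
    fun ⟨_, hb, hacc⟩ =>
      M.exists_isBranchE_of_isAccRun w (hFA w) ⟨(M.isBranch_iff_isRun w).1 hb, hacc⟩
  exact ⟨⟨fun ⟨b, hb⟩ => ⟨b, hsub hb⟩, hE⟩,
    fun hfin hne => ⟨hE hne, hfin.subset hsub, Set.ncard_le_ncard hsub hfin⟩⟩
end
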